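/- arXiv:1512.06912 — 9 statements merged into one kernel-verified Lean document; each statement's English description precedes it below -/
import Mathlib

section
/- In a closed process system over a finite type U with m transitions and k process instances, if there is an execution from a configuration c to a configuration c' in which every configuration has the same database component, then there is an execution from c to c' in which every configuration has that same database component and whose length is at most m * k. -/
/-- A closed process system over a type `U` of facts. -/
structure ProcSys (U : Type) [DecidableEq U] where
  /-- places -/
  P : Type
  /-- transitions -/
  T : Type
  [finP : Fintype P]
  [finT : Fintype T]
  src : T → P
  tgt : T → P
  /-- number of process instances -/
  k : ℕ
  /-- enabling predicate -/
  En : Fin k → T → Finset U → Prop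
  /-- writing function -/
  Wr : Fin k → T → Finset U → Finset U

attribute [instance] ProcSys.finP ProcSys.finT

namespace ProcSys

variable {U : Type} [DecidableEq U]

/-- A configuration: positions of the instances together with a database. -/
abbrev Config (S : ProcSys U) : Type := (Fin S.k → S.P) × Finset U

/-- An allowed step by instance `i` via transition `t`. -/
def Step (S : ProcSys U) (i : Fin S.k) (t : S.T) (c c' : S.Config) : Prop :=
  c.1 i = S.src t ∧ S.En i t c.2 ∧
    c' = (Function.update c.1 i (S.tgt t), c.2 ∪ S.Wr i t c.2)

/-- `f` (restricted to `0, …, n`) is an execution of length `n` from configuration `c`. -/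
def IsExec (S : ProcSys U) (c : S.Config) (n : ℕ) (f : ℕ → S.Config) : Prop :=
  f 0 = c ∧ ∀ j < n, ∃ (i : Fin S.k) (t : S.T), S.Step i t (f j) (f (j + 1))

end ProcSys

/-!
With the database frozen at `D`, the instances do not interact: each one moves on its own
along transitions that are enabled at `D` and write nothing outside `D`. Projecting the
execution to a single instance gives a walk in the transition graph; cutting out the cycles
leaves a walk without repeated transitions, of length at most `m`. Running these walks one
instance after the other is an execution with database `D` of length at most `m * k`.
-/

namespace Relation

variable {α : Type*} {r : α → α → Prop}

inductive ReachIn (r : α → α → Prop) : ℕ → α → α → Prop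
  | refl (a : α) : ReachIn r 0 a a
  | tail {n : ℕ} {a b c : α} : ReachIn r n a b → r b c → ReachIn r (n + 1) a c

namespace ReachIn

theorem trans {n m : ℕ} {a b c : α} (hab : ReachIn r n a b) (hbc : ReachIn r m b c) :
    ReachIn r (n + m) a c := by
  induction hbc with
  | refl => exact hab
  | tail _ hcd ih => exact (ih hab).tail hcd

theorem head {n : ℕ} {a b c : α} (hab : r a b) (hbc : ReachIn r n b c) :
    ReachIn r (n + 1) a c := by
  simpa only [Nat.add_comm] using ((refl a).tail hab).trans hbc

end ReachIn

end Relation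

open Relation

def IsWalk {P T : Type*} (src tgt : T → P) : P → P → List T → Prop
  | p, q, [] => p = q
  | p, q, t :: L => p = src t ∧ IsWalk src tgt (tgt t) q L

namespace IsWalk

variable {P T : Type*} {src tgt : T → P}

theorem append_iff {p q : P} {A B : List T} :
    IsWalk src tgt p q (A ++ B) ↔ ∃ r, IsWalk src tgt p r A ∧ IsWalk src tgt r q B := by
  induction A generalizing p with
  | nil => simp [IsWalk]
  | cons t A ih => simp [IsWalk, ih, and_assoc]

/-- A repeated edge closes a cycle, which is cut by restarting the walk at its later
occurrence. -/
theorem exists_nodup_sublist {p q : P} {L : List T} (h : IsWalk src tgt p q L) :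
    ∃ L', L'.Nodup ∧ L'.Sublist L ∧ IsWalk src tgt p q L' := by
  induction L generalizing p with
  | nil => exact ⟨[], List.nodup_nil, List.Sublist.slnil, h⟩
  | cons t L ih =>
    obtain ⟨hsrc, hL⟩ := h
    obtain ⟨L', hnd, hsub, hL'⟩ := ih hL
    by_cases ht : t ∈ L'
    · obtain ⟨A, B, rfl⟩ := List.append_of_mem ht
      obtain ⟨_, -, rfl, hB⟩ := append_iff.1 hL'
      have hsuffix := List.sublist_append_right A (t :: B)
      exact ⟨t :: B, hnd.sublist hsuffix, (hsuffix.trans hsub).cons t, hsrc, hB⟩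
    · exact ⟨t :: L', List.nodup_cons.2 ⟨ht, hnd⟩, hsub.cons_cons t, hsrc, hL'⟩

end IsWalk

namespace ProcSys

variable {U : Type} [DecidableEq U] (S : ProcSys U)

def Silent (D : Finset U) (i : Fin S.k) (t : S.T) : Prop :=
  S.En i t D ∧ S.Wr i t D ⊆ D

def SilentStep (D : Finset U) (pos pos' : Fin S.k → S.P) : Prop :=
  ∃ i t, S.Step i t (pos, D) (pos', D)

variable {S}

theorem step_const_db_iff {D : Finset U} {i : Fin S.k} {t : S.T} {pos pos' : Fin S.k → S.P} :
    S.Step i t (pos, D) (pos', D) ↔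
      pos i = S.src t ∧ S.Silent D i t ∧ pos' = Function.update pos i (S.tgt t) := by
  simp only [Step, Silent, Prod.ext_iff, Finset.left_eq_union]
  tauto

theorem exists_isExec_const_db_iff_reachIn {D : Finset U} {n : ℕ}
    {pos pos' : Fin S.k → S.P} :
    (∃ f, S.IsExec (pos, D) n f ∧ f n = (pos', D) ∧ ∀ j ≤ n, (f j).2 = D) ↔
      ReachIn (S.SilentStep D) n pos pos' := by
  constructor
  · rintro ⟨f, ⟨hf0, hstep⟩, hfn, hdb⟩
    induction n generalizing pos' with
    | zero =>
      obtain rfl : pos = pos' := congrArg Prod.fst (hf0.symm.trans hfn)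
      exact ReachIn.refl pos
    | succ n ih =>
      have hmid : f n = ((f n).1, D) := Prod.ext rfl (hdb n n.le_succ)
      obtain ⟨i, t, hlast⟩ := hstep n n.lt_succ_self
      rw [hmid, hfn] at hlast
      exact (ih (fun j hj => hstep j (by omega)) hmid fun j hj => hdb j (by omega)).tail
        ⟨i, t, hlast⟩
  · intro h
    induction h with
    | refl a => exact ⟨fun _ => (a, D), ⟨rfl, fun j hj => by omega⟩, rfl, fun _ _ => rfl⟩
    | @tail n a b c _ hbc ih =>
      obtain ⟨f, ⟨hf0, hstep⟩, hfn, hdb⟩ := ih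
      refine ⟨fun j => if j ≤ n then f j else (c, D), ⟨by simpa using hf0, fun j hj => ?_⟩,
        by simp, fun j hj => ?_⟩
      · rcases Nat.lt_or_eq_of_le (Nat.le_of_lt_succ hj) with hj | rfl
        · simpa [hj.le, Nat.succ_le_of_lt hj] using hstep j hj
        · obtain ⟨i, t, hbc⟩ := hbc
          exact ⟨i, t, by simpa [hfn] using hbc⟩
      · dsimp only
        split_ifs with hjn
        · exact hdb j hjn
        · rfl

theorem exists_walk_of_reachIn {D : Finset U} {n : ℕ} {pos pos' : Fin S.k → S.P}
    (h : ReachIn (S.SilentStep D) n pos pos') (i : Fin S.k) :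
    ∃ L, IsWalk S.src S.tgt (pos i) (pos' i) L ∧ ∀ t ∈ L, S.Silent D i t := by
  induction h with
  | refl => exact ⟨[], rfl, by simp⟩
  | @tail n a b c _ hstep ih =>
    obtain ⟨L, hL, hsilent⟩ := ih
    obtain ⟨j, t, hstep⟩ := hstep
    obtain ⟨hsrc, hjt, rfl⟩ := step_const_db_iff.1 hstep
    by_cases hji : j = i
    · subst hji
      refine ⟨L ++ [t], IsWalk.append_iff.2 ⟨b j, hL, hsrc, by simp [IsWalk]⟩, ?_⟩
      simpa [or_imp, forall_and, hjt] using hsilent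
    · exact ⟨L, by simpa [Function.update_of_ne (Ne.symm hji)] using hL, hsilent⟩

theorem reachIn_update_of_walk {D : Finset U} {i : Fin S.k} {q : S.P} {L : List S.T}
    {pos : Fin S.k → S.P} (hL : IsWalk S.src S.tgt (pos i) q L)
    (hsilent : ∀ t ∈ L, S.Silent D i t) :
    ReachIn (S.SilentStep D) L.length pos (Function.update pos i q) := by
  induction L generalizing pos with
  | nil => simpa [show q = pos i from hL.symm] using ReachIn.refl pos
  | cons t L ih =>
    obtain ⟨hsrc, hL⟩ := hL
    have hstep : S.SilentStep D pos (Function.update pos i (S.tgt t)) :=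
      ⟨i, t, step_const_db_iff.2 ⟨hsrc, hsilent t List.mem_cons_self, rfl⟩⟩
    have hrest := ih (pos := Function.update pos i (S.tgt t)) (by simpa using hL)
      fun s hs => hsilent s (List.mem_cons_of_mem t hs)
    simpa using hrest.head hstep

theorem reachIn_of_forall_walk {D : Finset U} (s : Finset (Fin S.k))
    {pos pos' : Fin S.k → S.P} (hout : ∀ i ∉ s, pos i = pos' i)
    (hwalk : ∀ i ∈ s, ∃ L : List S.T, L.Nodup ∧ IsWalk S.src S.tgt (pos i) (pos' i) L ∧
      ∀ t ∈ L, S.Silent D i t) :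
    ∃ n ≤ Fintype.card S.T * s.card, ReachIn (S.SilentStep D) n pos pos' := by
  induction s using Finset.induction_on generalizing pos with
  | empty =>
    obtain rfl : pos = pos' := funext fun i => hout i (Finset.notMem_empty i)
    exact ⟨0, Nat.zero_le _, ReachIn.refl pos⟩
  | insert i s hi ih =>
    obtain ⟨L, hnd, hL, hsilent⟩ := hwalk i (Finset.mem_insert_self i s)
    have hout' : ∀ j ∉ s, Function.update pos i (pos' i) j = pos' j := by
      intro j hj
      by_cases hji : j = i
      · simp [hji]
      · rw [Function.update_of_ne hji]
        exact hout j (by simp [hji, hj])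
    obtain ⟨n, hn, hrest⟩ := ih hout' fun j hj => by
      rw [Function.update_of_ne (ne_of_mem_of_not_mem hj hi)]
      exact hwalk j (Finset.mem_insert_of_mem hj)
    refine ⟨L.length + n, ?_, (reachIn_update_of_walk hL hsilent).trans hrest⟩
    rw [Finset.card_insert_of_notMem hi, mul_add_one]
    have := hnd.length_le_card
    omega

end ProcSys

theorem exec_constant_db_shorten_general (U : Type) [DecidableEq U]
    (S : ProcSys U) (c c' : S.Config) (n : ℕ) (f : ℕ → S.Config)
    (hexec : S.IsExec c n f) (hlast : f n = c')
    (hdb : ∀ j ≤ n, (f j).2 = c.2) :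
    ∃ (n' : ℕ) (f' : ℕ → S.Config),
      n' ≤ Fintype.card S.T * S.k ∧
      S.IsExec c n' f' ∧ f' n' = c' ∧ ∀ j ≤ n', (f' j).2 = c.2 := by
  have hc' : c' = (c'.1, c.2) := Prod.ext rfl (hlast ▸ hdb n le_rfl)
  have hreach : ReachIn (S.SilentStep c.2) n c.1 c'.1 :=
    ProcSys.exists_isExec_const_db_iff_reachIn.1 ⟨f, hexec, hlast.trans hc', hdb⟩
  have hwalk : ∀ i ∈ Finset.univ, ∃ L : List S.T, L.Nodup ∧
      IsWalk S.src S.tgt (c.1 i) (c'.1 i) L ∧ ∀ t ∈ L, S.Silent c.2 i t := fun i _ => by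
    obtain ⟨L, hL, hsilent⟩ := ProcSys.exists_walk_of_reachIn hreach i
    obtain ⟨L', hnd, hsub, hL'⟩ := hL.exists_nodup_sublist
    exact ⟨L', hnd, hL', fun t ht => hsilent t (hsub.subset ht)⟩
  obtain ⟨n', hn', hreach'⟩ := ProcSys.reachIn_of_forall_walk Finset.univ (by simp) hwalk
  obtain ⟨f', hexec', hlast', hdb'⟩ := ProcSys.exists_isExec_const_db_iff_reachIn.2 hreach'
  exact ⟨n', f', by simpa using hn', hexec', hlast'.trans hc'.symm, hdb'⟩

/-- an execution segment in which the database never changes can be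
shortened to length at most `m * k` while keeping the same endpoints and still
keeping the database constant. -/
theorem exec_constant_db_shorten (U : Type) [Fintype U] [DecidableEq U]
    (S : ProcSys U) (c c' : S.Config) (n : ℕ) (f : ℕ → S.Config)
    (hexec : S.IsExec c n f) (hlast : f n = c')
    (hdb : ∀ j ≤ n, (f j).2 = c.2) :
    ∃ (n' : ℕ) (f' : ℕ → S.Config),
      n' ≤ Fintype.card S.T * S.k ∧
      S.IsExec c n' f' ∧ f' n' = c' ∧ ∀ j ≤ n', (f' j).2 = c.2 :=
  exec_constant_db_shorten_general U S c c' n f hexec hlast hdb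
end

section
/- In a closed process system over a finite type U with m transitions and k process instances, for every execution from a configuration c there exists an execution from c of length at most m * k * (Fintype.card U + 1) + Fintype.card U whose final configuration (both the position function and the database) equals the final configuration of the given execution. In particular, every database producible by some execution is producible by an execution of length at most m * k * (Fintype.card U + 1) + Fintype.card U. -/
/-!
While the database stays fixed at `D`, the instances do not interact: instance `i` can fire `t`
exactly when it sits at `src t`, and, as `D` does not grow, `t` must be enabled on `D` and write
nothing outside `D`. So the positions reachable in such a phase are obtained instance by instance
along paths in the graph of these silent transitions, and a shortest such path repeats no
transition; running the instances one after the other reaches the same configuration in at most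
`m * k` steps. The database strictly grows between two phases, so an execution splits into at most
`|U| + 1` phases separated by at most `|U|` growing steps.
-/

open Relation

namespace ProcSys

variable {U : Type} [DecidableEq U] {S : ProcSys U}

def Next (S : ProcSys U) (c c' : S.Config) : Prop := ∃ i t, S.Step i t c c'

def ReachesIn (S : ProcSys U) (n : ℕ) (c c' : S.Config) : Prop :=
  ∃ f, S.IsExec c n f ∧ f n = c'

lemma Next.db_subset {c c' : S.Config} (h : S.Next c c') : c.2 ⊆ c'.2 := by
  obtain ⟨i, t, -, -, rfl⟩ := h
  exact Finset.subset_union_left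

lemma db_subset_of_reflTransGen {c c' : S.Config} (h : ReflTransGen S.Next c c') : c.2 ⊆ c'.2 := by
  induction h with
  | refl => rfl
  | tail _ hnext ih => exact ih.trans hnext.db_subset

lemma reachesIn_zero (c : S.Config) : S.ReachesIn 0 c c :=
  ⟨fun _ => c, ⟨rfl, fun _ h => absurd h (Nat.not_lt_zero _)⟩, rfl⟩

lemma reachesIn_succ_iff {n : ℕ} {c c'' : S.Config} :
    S.ReachesIn (n + 1) c c'' ↔ ∃ c', S.ReachesIn n c c' ∧ S.Next c' c'' := by
  constructor
  · rintro ⟨f, ⟨h0, hstep⟩, rfl⟩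
    exact ⟨f n, ⟨f, ⟨h0, fun j hj => hstep j (by omega)⟩, rfl⟩, hstep n (by omega)⟩
  · rintro ⟨c', ⟨f, ⟨h0, hstep⟩, rfl⟩, hnext⟩
    refine ⟨Function.update f (n + 1) c'', ⟨?_, fun j hj => ?_⟩, Function.update_self ..⟩
    · rwa [Function.update_of_ne (by omega)]
    · rw [Function.update_of_ne (by omega)]
      rcases Nat.lt_succ_iff_lt_or_eq.mp hj with hj | rfl
      · rw [Function.update_of_ne (by omega)]
        exact hstep j hj
      · rwa [Function.update_self]

lemma ReachesIn.trans {n m : ℕ} {a b c : S.Config} (hab : S.ReachesIn n a b)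
    (hbc : S.ReachesIn m b c) : S.ReachesIn (n + m) a c := by
  induction m generalizing c with
  | zero => obtain ⟨f, ⟨rfl, -⟩, rfl⟩ := hbc; exact hab
  | succ m ih =>
    obtain ⟨b', hbb', hnext⟩ := reachesIn_succ_iff.mp hbc
    exact reachesIn_succ_iff.mpr ⟨b', ih hbb', hnext⟩

lemma ReachesIn.reflTransGen {n : ℕ} {c c' : S.Config} (h : S.ReachesIn n c c') :
    ReflTransGen S.Next c c' := by
  induction n generalizing c' with
  | zero => obtain ⟨f, ⟨rfl, -⟩, rfl⟩ := h; rfl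
  | succ n ih =>
    obtain ⟨b, hb, hnext⟩ := reachesIn_succ_iff.mp h
    exact (ih hb).tail hnext

lemma eq_or_exists_db_ssubset_of_reflTransGen {c c' : S.Config} (h : ReflTransGen S.Next c c') :
    c'.2 = c.2 ∨ ∃ c₁ c₂, ReflTransGen S.Next c c₁ ∧ c₁.2 = c.2 ∧ S.Next c₁ c₂ ∧
      c.2 ⊂ c₂.2 ∧ ReflTransGen S.Next c₂ c' := by
  induction h using ReflTransGen.head_induction_on with
  | refl => exact Or.inl rfl
  | @head a b hab hbc ih =>
    by_cases hb : b.2 = a.2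
    · rcases ih with ih | ⟨c₁, c₂, h₁, hD₁, hnext, hgrow, h₂⟩
      · exact Or.inl (ih.trans hb)
      · exact Or.inr ⟨c₁, c₂, .head hab h₁, hD₁.trans hb, hnext, hb ▸ hgrow, h₂⟩
    · exact Or.inr ⟨a, b, .refl, rfl, hab, hab.db_subset.ssubset_of_ne (Ne.symm hb), hbc⟩

def IsSilent (S : ProcSys U) (D : Finset U) (i : Fin S.k) (t : S.T) : Prop :=
  S.En i t D ∧ S.Wr i t D ⊆ D

def SilentEdge (S : ProcSys U) (D : Finset U) (i : Fin S.k) (p q : S.P) : Prop :=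
  ∃ t, S.src t = p ∧ S.tgt t = q ∧ S.IsSilent D i t

def SilentPath (S : ProcSys U) (D : Finset U) (i : Fin S.k) : S.P → List S.T → S.P → Prop
  | p, [], q => p = q
  | p, t :: ts, q => S.src t = p ∧ S.IsSilent D i t ∧ S.SilentPath D i (S.tgt t) ts q

lemma reflTransGen_silentEdge_of_reflTransGen {c c' : S.Config} (h : ReflTransGen S.Next c c')
    (hD : c'.2 = c.2) (i : Fin S.k) : ReflTransGen (S.SilentEdge c.2 i) (c.1 i) (c'.1 i) := by
  induction h with
  | refl => rfl
  | @tail b c' hcb hnext ih =>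
    have hDb : b.2 = c.2 :=
      (hD ▸ hnext.db_subset).antisymm (db_subset_of_reflTransGen hcb)
    obtain ⟨j, t, hsrc, hen, rfl⟩ := hnext
    have hWr : S.Wr j t b.2 ⊆ c.2 := hD ▸ Finset.subset_union_right
    by_cases hij : i = j
    · subst hij
      rw [hDb] at hen hWr
      exact (ih hDb).tail ⟨t, hsrc.symm, (Function.update_self i (S.tgt t) b.1).symm, hen, hWr⟩
    · show ReflTransGen _ _ (Function.update b.1 j (S.tgt t) i)
      rw [Function.update_of_ne hij]
      exact ih hDb

lemma SilentPath.of_append_cons {D : Finset U} {i : Fin S.k} {p q : S.P} {t : S.T} :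
    ∀ {as bs : List S.T}, S.SilentPath D i p (as ++ t :: bs) q → S.SilentPath D i (S.tgt t) bs q
  | [], _, h => h.2.2
  | _ :: _, _, h => of_append_cons h.2.2

/-- A repeated transition closes a loop, which can be cut out. -/
lemma exists_nodup_silentPath {D : Finset U} {i : Fin S.k} {p q : S.P}
    (h : ReflTransGen (S.SilentEdge D i) p q) : ∃ ts, ts.Nodup ∧ S.SilentPath D i p ts q := by
  induction h using ReflTransGen.head_induction_on with
  | refl => exact ⟨[], List.nodup_nil, rfl⟩
  | head hedge _ ih =>
    obtain ⟨t, hsrc, htgt, hsilent⟩ := hedge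
    obtain ⟨ts, hnodup, hpath⟩ := ih
    by_cases ht : t ∈ ts
    · obtain ⟨as, bs, rfl⟩ := List.append_of_mem ht
      exact ⟨t :: bs, hnodup.sublist (List.sublist_append_right ..), hsrc, hsilent,
        hpath.of_append_cons⟩
    · exact ⟨t :: ts, List.nodup_cons.mpr ⟨ht, hnodup⟩, hsrc, hsilent, htgt ▸ hpath⟩

lemma SilentPath.reachesIn {D : Finset U} {i : Fin S.k} {q : S.P} :
    ∀ {p : S.P} {ts : List S.T}, S.SilentPath D i p ts q → ∀ pos : Fin S.k → S.P, pos i = p →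
      S.ReachesIn ts.length (pos, D) (Function.update pos i q, D)
  | _, [], hpq, pos, hp => by
    rw [← hpq, ← hp, Function.update_eq_self]
    exact reachesIn_zero _
  | _, t :: _, ⟨hsrc, ⟨hen, hWr⟩, hpath⟩, pos, hp => by
    have hnext : S.Next (pos, D) (Function.update pos i (S.tgt t), D) :=
      ⟨i, t, hp.trans hsrc.symm, hen, by rw [Finset.union_eq_left.mpr hWr]⟩
    have hrest := hpath.reachesIn (Function.update pos i (S.tgt t)) (Function.update_self ..)
    rw [Function.update_idem] at hrest
    rw [List.length_cons, add_comm]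
    exact (reachesIn_succ_iff.mpr ⟨_, reachesIn_zero _, hnext⟩).trans hrest

/-- The instances walk their silent paths one after the other. -/
lemma exists_reachesIn_le_of_forall_silentPath {D : Finset U} {pos pos' : Fin S.k → S.P}
    (h : ∀ i, ∃ ts : List S.T,
      ts.length ≤ Fintype.card S.T ∧ S.SilentPath D i (pos i) ts (pos' i)) :
    ∃ n ≤ Fintype.card S.T * S.k, S.ReachesIn n (pos, D) (pos', D) := by
  suffices ∀ s : Finset (Fin S.k),
      ∃ n ≤ Fintype.card S.T * s.card, S.ReachesIn n (pos, D) (s.piecewise pos' pos, D) by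
    simpa using this Finset.univ
  intro s
  induction s using Finset.induction_on with
  | empty => exact ⟨0, Nat.zero_le _, by rw [Finset.piecewise_empty]; exact reachesIn_zero _⟩
  | @insert a s ha ih =>
    obtain ⟨n, hn, hreach⟩ := ih
    obtain ⟨ts, hlen, hpath⟩ := h a
    have hwalk := hpath.reachesIn (s.piecewise pos' pos) (Finset.piecewise_eq_of_notMem _ _ _ ha)
    rw [← Finset.piecewise_insert] at hwalk
    refine ⟨n + ts.length, ?_, hreach.trans hwalk⟩
    rw [Finset.card_insert_of_notMem ha, mul_add_one]
    omega

lemma exists_reachesIn_le_of_reflTransGen_of_db_eq {c c' : S.Config}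
    (h : ReflTransGen S.Next c c') (hD : c'.2 = c.2) :
    ∃ n ≤ Fintype.card S.T * S.k, S.ReachesIn n c c' := by
  have hpaths (i : Fin S.k) :
      ∃ ts : List S.T, ts.length ≤ Fintype.card S.T ∧ S.SilentPath c.2 i (c.1 i) ts (c'.1 i) := by
    obtain ⟨ts, hnodup, hpath⟩ :=
      exists_nodup_silentPath (reflTransGen_silentEdge_of_reflTransGen h hD i)
    exact ⟨ts, hnodup.length_le_card, hpath⟩
  obtain ⟨n, hn, hreach⟩ := exists_reachesIn_le_of_forall_silentPath hpaths
  rw [show c' = (c'.1, c.2) from Prod.ext rfl hD]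
  exact ⟨n, hn, hreach⟩

lemma exists_reachesIn_le_of_reflTransGen {c c' : S.Config} (h : ReflTransGen S.Next c c') :
    ∃ n ≤ Fintype.card S.T * S.k * (c'.2.card - c.2.card + 1) + (c'.2.card - c.2.card),
      S.ReachesIn n c c' := by
  generalize hd : c'.2.card - c.2.card = d
  induction d using Nat.strong_induction_on generalizing c with
  | _ d ih =>
  rcases eq_or_exists_db_ssubset_of_reflTransGen h with hD | ⟨c₁, c₂, h₁, hD₁, hnext, hgrow, h₂⟩
  · obtain ⟨n, hn, hreach⟩ := exists_reachesIn_le_of_reflTransGen_of_db_eq h hD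
    exact ⟨n, hn.trans (by nlinarith), hreach⟩
  · have hcard : c.2.card < c₂.2.card := Finset.card_lt_card hgrow
    have hcard' : c₂.2.card ≤ c'.2.card := Finset.card_le_card (db_subset_of_reflTransGen h₂)
    obtain ⟨n₁, hn₁, hreach₁⟩ := exists_reachesIn_le_of_reflTransGen_of_db_eq h₁ hD₁
    have hlt : c'.2.card - c₂.2.card < d := by omega
    obtain ⟨n₂, hn₂, hreach₂⟩ := ih _ hlt h₂ rfl
    have hstep : S.ReachesIn 1 c₁ c₂ := reachesIn_succ_iff.mpr ⟨c₁, reachesIn_zero _, hnext⟩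
    refine ⟨n₁ + 1 + n₂, ?_, (hreach₁.trans hstep).trans hreach₂⟩
    have : Fintype.card S.T * S.k * (c'.2.card - c₂.2.card + 1 + 1) ≤
        Fintype.card S.T * S.k * (d + 1) := Nat.mul_le_mul_left _ (by omega)
    linarith

end ProcSys

/-- every execution can be replaced by one of length at most
`m * k * (Fintype.card U + 1) + Fintype.card U` with the same final configuration. -/
theorem exec_bounded_length (U : Type) [Fintype U] [DecidableEq U]
    (S : ProcSys U) (c : S.Config) (n : ℕ) (f : ℕ → S.Config)
    (hexec : S.IsExec c n f) :
    ∃ (n' : ℕ) (f' : ℕ → S.Config),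
      n' ≤ Fintype.card S.T * S.k * (Fintype.card U + 1) + Fintype.card U ∧
      S.IsExec c n' f' ∧ f' n' = f n := by
  obtain ⟨n', hn', f', hexec', hend⟩ :=
    ProcSys.exists_reachesIn_le_of_reflTransGen (ProcSys.ReachesIn.reflTransGen ⟨f, hexec, rfl⟩)
  have hd : (f n).2.card - c.2.card ≤ Fintype.card U :=
    (Nat.sub_le _ _).trans (Finset.card_le_univ _)
  refine ⟨n', f', hn'.trans ?_, hexec', hend⟩
  gcongr
end

section
/- Let U be a finite type and let Prod : Finset U → Set (Finset U) be monotone, i.e., D ⊆ E implies Prod D ⊆ Prod E. Define the step relation on Finset U by: D steps to D ∪ W for each W ∈ Prod D, and let reachability be the reflexive-transitive closure of this relation. Then for every D₀ : Finset U: (a) if D₁ and D₂ are both reachable from D₀, then there exists D₃ reachable from D₁ (hence from D₀) with D₂ ⊆ D₃; and (b) there is a greatest reachable database, i.e., a D* reachable from D₀ such that D' ⊆ D* for every D' reachable from D₀. -/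
/-!
Every run of a monotone process only enlarges the database, and by monotonicity a run from `A`
can be replayed, step by step, from any `C ⊇ A`, ending above the original run. Hence the
reachable databases form a directed family; it is finite because `U` is, so a maximal reachable
database exists, and directedness makes it the greatest one.
-/

open Relation

def ProdStep {U : Type} [DecidableEq U] (Pr : Finset U → Set (Finset U))
    (D E : Finset U) : Prop :=
  ∃ W ∈ Pr D, E = D ∪ W

theorem Set.Finite.exists_isGreatest_of_directedOn {α : Type*} [Preorder α] {s : Set α}
    (hfin : s.Finite) (hne : s.Nonempty) (hdir : DirectedOn (· ≤ ·) s) :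
    ∃ a, IsGreatest s a := by
  obtain ⟨m, hm⟩ := hfin.exists_maximal hne
  refine ⟨m, hm.prop, fun b hb => ?_⟩
  obtain ⟨c, hc, hmc, hbc⟩ := hdir m hm.prop b hb
  exact hbc.trans (hm.le_of_ge hc hmc)

namespace ProdStep

variable {U : Type} [DecidableEq U] {Pr : Finset U → Set (Finset U)}

theorem subset_of_reflTransGen {A B : Finset U} (h : ReflTransGen (ProdStep Pr) A B) :
    A ⊆ B := by
  induction h with
  | refl => exact subset_rfl
  | tail _ hstep ih =>
    obtain ⟨W, -, rfl⟩ := hstep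
    exact ih.trans Finset.subset_union_left

theorem exists_reflTransGen_of_subset (hPr : Monotone Pr) {A B C : Finset U}
    (h : ReflTransGen (ProdStep Pr) A B) (hAC : A ⊆ C) :
    ∃ C', ReflTransGen (ProdStep Pr) C C' ∧ B ⊆ C' := by
  induction h with
  | refl => exact ⟨C, .refl, hAC⟩
  | tail _ hstep ih =>
    obtain ⟨C', hCC', hBC'⟩ := ih
    obtain ⟨W, hW, rfl⟩ := hstep
    exact ⟨C' ∪ W, hCC'.tail ⟨W, hPr hBC' hW, rfl⟩, Finset.union_subset_union hBC' subset_rfl⟩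

theorem directedOn_reachable (hPr : Monotone Pr) (D₀ : Finset U) :
    DirectedOn (· ≤ ·) {D | ReflTransGen (ProdStep Pr) D₀ D} := by
  intro D₁ h₁ D₂ h₂
  obtain ⟨D₃, h₁₃, h₂₃⟩ := exists_reflTransGen_of_subset hPr h₂ (subset_of_reflTransGen h₁)
  exact ⟨D₃, h₁.trans h₁₃, subset_of_reflTransGen h₁₃, h₂₃⟩

end ProdStep

/-- for a monotone production function, (a) the reachable databases
are directed: anything reachable from `D₀` can still be covered after moving on
to any other reachable database; and (b) there is a greatest reachable database. -/
theorem monotone_prod_directed_and_greatest (U : Type) [Fintype U] [DecidableEq U]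
    (Pr : Finset U → Set (Finset U))
    (hmono : ∀ D E : Finset U, D ⊆ E → Pr D ⊆ Pr E) (D₀ : Finset U) :
    (∀ D₁ D₂ : Finset U,
        Relation.ReflTransGen (ProdStep Pr) D₀ D₁ →
        Relation.ReflTransGen (ProdStep Pr) D₀ D₂ →
        ∃ D₃ : Finset U, Relation.ReflTransGen (ProdStep Pr) D₁ D₃ ∧ D₂ ⊆ D₃) ∧
    (∃ Dstar : Finset U,
        Relation.ReflTransGen (ProdStep Pr) D₀ Dstar ∧
        ∀ D' : Finset U, Relation.ReflTransGen (ProdStep Pr) D₀ D' → D' ⊆ Dstar) := by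
  have hPr : Monotone Pr := hmono
  refine ⟨fun D₁ D₂ h₁ h₂ =>
    ProdStep.exists_reflTransGen_of_subset hPr h₂ (ProdStep.subset_of_reflTransGen h₁), ?_⟩
  obtain ⟨Dstar, hreach, hgreatest⟩ := (Set.toFinite _).exists_isGreatest_of_directedOn
    ⟨D₀, .refl⟩ (ProdStep.directedOn_reachable hPr D₀)
  exact ⟨Dstar, hreach, fun _ hD' => hgreatest hD'⟩
end

section
/- Let n ≥ 1 and let τ₁ < τ₂ < ⋯ < τₙ be rational numbers. Then there exists a monotone function δ : ℚ → ℚ such that: (i) δ τᵢ = τᵢ for every i; (ii) for every τ : ℚ and every i, τ < τᵢ ↔ δ τ < τᵢ and τᵢ < τ ↔ τᵢ < δ τ (hence also τ = τᵢ ↔ δ τ = τᵢ); and (iii) the range of δ contains at most 2 * n + 1 elements. -/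
/-!
Two points lie on the same side of every deadline exactly when they lie in the same cell of the
partition of the line into the `n` deadlines and the `n + 1` open gaps between and around them.
Numbering the cells `0, …, 2n` from left to right gives a monotone index, and `δ` sends each
point to a fixed representative of its cell (the deadline itself, for the singleton cells).
-/

open Finset

variable {α : Type*} [LinearOrder α] (S : Finset α)

/-- The cells of `S` are its points and the open intervals cut out by them; `cellIndex S x`
numbers the cell containing `x`, the points of `S` getting the odd numbers. -/
def cellIndex (x : α) : ℕ := #{s ∈ S | s < x} + #{s ∈ S | s ≤ x}

theorem cellIndex_mono : Monotone (cellIndex S) := by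
  intro x y hxy
  unfold cellIndex
  gcongr

theorem cellIndex_le (x : α) : cellIndex S x ≤ 2 * #S := by
  have := card_filter_le S (· < x)
  have := card_filter_le S (· ≤ x)
  unfold cellIndex
  omega

variable {S}

theorem cellIndex_lt_of_lt_of_le {s x y : α} (hs : s ∈ S) (hxs : x < s) (hsy : s ≤ y) :
    cellIndex S x < cellIndex S y := by
  have hxy := hxs.le.trans hsy
  unfold cellIndex
  apply Nat.add_lt_add_of_le_of_lt
  · gcongr
  · apply card_lt_card
    rw [ssubset_iff_of_subset (monotone_filter_right S fun _ _ ht => ht.trans hxy)]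
    exact ⟨s, by simp [hs, hsy, hxs]⟩

theorem cellIndex_lt_of_le_of_lt {s x y : α} (hs : s ∈ S) (hxs : x ≤ s) (hsy : s < y) :
    cellIndex S x < cellIndex S y := by
  have hxy := hxs.trans hsy.le
  unfold cellIndex
  apply Nat.add_lt_add_of_lt_of_le
  · apply card_lt_card
    rw [ssubset_iff_of_subset (monotone_filter_right S fun _ _ ht => ht.trans_le hxy)]
    exact ⟨s, by simp [hs, hsy, hxs]⟩
  · gcongr

theorem lt_iff_lt_of_cellIndex_eq {s x y : α} (hs : s ∈ S) (h : cellIndex S x = cellIndex S y) :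
    x < s ↔ y < s := by
  constructor <;> intro hlt <;> by_contra! hle
  · exact (cellIndex_lt_of_lt_of_le hs hlt hle).ne h
  · exact (cellIndex_lt_of_lt_of_le hs hlt hle).ne h.symm

theorem lt_iff_lt_of_cellIndex_eq' {s x y : α} (hs : s ∈ S) (h : cellIndex S x = cellIndex S y) :
    s < x ↔ s < y := by
  constructor <;> intro hlt <;> by_contra! hle
  · exact (cellIndex_lt_of_le_of_lt hs hle hlt).ne h.symm
  · exact (cellIndex_lt_of_le_of_lt hs hle hlt).ne h

variable (S) [Nonempty α]

noncomputable def discretize (x : α) : α := Function.invFun (cellIndex S) (cellIndex S x)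

theorem cellIndex_discretize (x : α) : cellIndex S (discretize S x) = cellIndex S x :=
  Function.invFun_eq ⟨x, rfl⟩

theorem discretize_mono : Monotone (discretize S) := by
  intro x y hxy
  by_contra! hlt
  have hle := cellIndex_mono S hlt.le
  rw [cellIndex_discretize, cellIndex_discretize] at hle
  have heq : discretize S x = discretize S y := by
    rw [discretize, discretize, le_antisymm (cellIndex_mono S hxy) hle]
  exact hlt.ne heq.symm

theorem discretize_mem_image_range (x : α) :
    discretize S x ∈ (range (2 * #S + 1)).image (Function.invFun (cellIndex S)) :=
  mem_image_of_mem _ (mem_range.2 (Nat.lt_succ_of_le (cellIndex_le S x)))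

variable {S}

theorem discretize_lt_iff {s : α} (hs : s ∈ S) (x : α) : discretize S x < s ↔ x < s :=
  lt_iff_lt_of_cellIndex_eq hs (cellIndex_discretize S x)

theorem lt_discretize_iff {s : α} (hs : s ∈ S) (x : α) : s < discretize S x ↔ s < x :=
  lt_iff_lt_of_cellIndex_eq' hs (cellIndex_discretize S x)

theorem discretize_eq_iff {s : α} (hs : s ∈ S) (x : α) : discretize S x = s ↔ x = s := by
  simp only [le_antisymm_iff, ← not_lt, discretize_lt_iff hs, lt_discretize_iff hs]

theorem discretize_of_mem {s : α} (hs : s ∈ S) : discretize S s = s :=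
  (discretize_eq_iff hs s).2 rfl

theorem timestamp_discretization_general (n : ℕ) (τ : Fin n → ℚ)
    (hτ : StrictMono τ) :
    ∃ δ : ℚ → ℚ, Monotone δ ∧ (∀ i : Fin n, δ (τ i) = τ i) ∧
      (∀ (x : ℚ) (i : Fin n),
        (x < τ i ↔ δ x < τ i) ∧ (τ i < x ↔ τ i < δ x) ∧ (x = τ i ↔ δ x = τ i)) ∧
      ∃ s : Finset ℚ, (∀ x : ℚ, δ x ∈ s) ∧ s.card ≤ 2 * n + 1 := by
  set S := univ.image τ
  have hS : #S = n := by rw [card_image_of_injective _ hτ.injective, card_univ, Fintype.card_fin]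
  have hτS (i : Fin n) : τ i ∈ S := mem_image_of_mem τ (mem_univ i)
  refine ⟨discretize S, discretize_mono S, fun i => discretize_of_mem (hτS i),
    fun x i => ⟨(discretize_lt_iff (hτS i) x).symm, (lt_discretize_iff (hτS i) x).symm,
      (discretize_eq_iff (hτS i) x).symm⟩, _, discretize_mem_image_range S, ?_⟩
  exact card_image_le.trans (by rw [card_range, hS])

/-- Abstraction of timestamps: given deadlines `τ 0 < … < τ (n-1)`
(`n ≥ 1`), there is a monotone discretization `δ : ℚ → ℚ` fixing every deadline,
preserving all strict comparisons (hence also equality) with each deadline, and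
whose range has at most `2 * n + 1` elements. -/
theorem timestamp_discretization (n : ℕ) (hn : 1 ≤ n) (τ : Fin n → ℚ)
    (hτ : StrictMono τ) :
    ∃ δ : ℚ → ℚ, Monotone δ ∧ (∀ i : Fin n, δ (τ i) = τ i) ∧
      (∀ (x : ℚ) (i : Fin n),
        (x < τ i ↔ δ x < τ i) ∧ (τ i < x ↔ τ i < δ x) ∧ (x = τ i ↔ δ x = τ i)) ∧
      ∃ s : Finset ℚ, (∀ x : ℚ, δ x ∈ s) ∧ s.card ≤ 2 * n + 1 :=
  timestamp_discretization_general n τ hτ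
end

section
/- Let D and W be databases over relation symbols S and constants C, let Q be a safe conjunctive query, let A be a set of constants containing the active domain adom(D) and all constants of Q, and let a : C with a ∉ A. Define δ : C → C by δ x = x if x ∈ A and δ x = a otherwise. If Q(D ∪ W) ≠ Q(D), then Q(D ∪ δ[W]) ≠ Q(D). -/
/-- A fact over relation symbols `S` with arities `ar` and constants `C`. -/
abbrev DBFact (S : Type) (ar : S → ℕ) (C : Type) : Type := (R : S) × (Fin (ar R) → C)

/-- A conjunctive query: `v` variables, a head `h : Fin w → Fin v`, and a finite
set of body atoms, an atom being a relation symbol together with a tuple of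
constants and variables. -/
structure CQ (S : Type) (ar : S → ℕ) (C : Type) where
  v : ℕ
  w : ℕ
  head : Fin w → Fin v
  body : Set ((R : S) × (Fin (ar R) → C ⊕ Fin v))
  body_finite : body.Finite

namespace CQ

variable {S : Type} {ar : S → ℕ} {C : Type}

/-- The assignment `α` satisfies the body of `Q` in the database `D`. -/
def Satisfies (Q : CQ S ar C) (D : Set (DBFact S ar C)) (α : Fin Q.v → C) : Prop :=
  ∀ a ∈ Q.body, (⟨a.1, fun l => Sum.elim id α (a.2 l)⟩ : DBFact S ar C) ∈ D

/-- The answer set `Q(D)`. -/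
def answers (Q : CQ S ar C) (D : Set (DBFact S ar C)) : Set (Fin Q.w → C) :=
  {t | ∃ α : Fin Q.v → C, Q.Satisfies D α ∧ t = fun j => α (Q.head j)}

end CQ

/-- Apply a renaming of constants `δ` to a fact componentwise. -/
def mapFact {S : Type} {ar : S → ℕ} {C : Type} (δ : C → C) (fct : DBFact S ar C) :
    DBFact S ar C :=
  ⟨fct.1, fun l => δ (fct.2 l)⟩

/-- Abstraction Principle, core: collapsing all constants outside a
set `A` containing the active domain of `D` and the constants of the safe query
`Q` to one fresh constant `a ∉ A` preserves the existence of a new query answer. -/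
theorem cq_new_answer_preserved_by_collapse {S : Type} [Fintype S] {ar : S → ℕ}
    {C : Type} (Q : CQ S ar C)
    (hsafe : ∀ j : Fin Q.v, ∃ a ∈ Q.body, ∃ l, a.2 l = Sum.inr j)
    (D W : Set (DBFact S ar C)) (A : Set C)
    (hadom : ∀ fct ∈ D, ∀ l, fct.2 l ∈ A)
    (hconsts : ∀ c : C, (∃ a ∈ Q.body, ∃ l, a.2 l = Sum.inl c) → c ∈ A)
    (a : C) (ha : a ∉ A) (δ : C → C)
    (hδA : ∀ x ∈ A, δ x = x) (hδout : ∀ x ∉ A, δ x = a)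
    (hne : Q.answers (D ∪ W) ≠ Q.answers D) :
    Q.answers (D ∪ mapFact δ '' W) ≠ Q.answers D := by
  classical
  have mono : ∀ (X Y : Set (DBFact S ar C)), X ⊆ Y → Q.answers X ⊆ Q.answers Y := by
    intro X Y hXY t ht
    obtain ⟨α, hα, rfl⟩ := ht
    exact ⟨α, fun b hb => hXY (hα b hb), rfl⟩
  have hwit : ∃ t, t ∈ Q.answers (D ∪ W) ∧ t ∉ Q.answers D := by
    by_contra h
    push_neg at h
    exact hne (Set.Subset.antisymm h (mono D (D ∪ W) Set.subset_union_left))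
  obtain ⟨t, ht, htD⟩ := hwit
  obtain ⟨α, hα, rfl⟩ := ht
  have hsat : Q.Satisfies (D ∪ mapFact δ '' W) (δ ∘ α) := by
    intro b hb
    have hb' := hα b hb
    have key : (⟨b.1, fun l => Sum.elim id (δ ∘ α) (b.2 l)⟩ : DBFact S ar C)
        = mapFact δ ⟨b.1, fun l => Sum.elim id α (b.2 l)⟩ := by
      simp only [mapFact]
      congr 1
      funext l
      cases h : b.2 l with
      | inl c => simp [hδA c (hconsts c ⟨b, hb, l, h⟩)]
      | inr j => simp
    rw [key]
    cases hb' with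
    | inl hD =>
      left
      have heq : mapFact δ (⟨b.1, fun l => Sum.elim id α (b.2 l)⟩ : DBFact S ar C)
          = ⟨b.1, fun l => Sum.elim id α (b.2 l)⟩ := by
        simp only [mapFact]
        congr 1
        funext l
        exact hδA _ (hadom _ hD l)
      rw [heq]; exact hD
    | inr hW => exact Or.inr ⟨_, hW, rfl⟩
  intro hcontra
  have ht' : (fun j => (δ ∘ α) (Q.head j)) ∈ Q.answers D := by
    rw [← hcontra]
    exact ⟨δ ∘ α, hsat, rfl⟩
  obtain ⟨β, hβ, hβeq⟩ := ht'
  have hβA : ∀ j : Fin Q.v, β j ∈ A := by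
    intro j
    obtain ⟨b, hb, l, hl⟩ := hsafe j
    have := hadom _ (hβ b hb) l
    simpa [hl] using this
  apply htD
  refine ⟨β, hβ, ?_⟩
  funext j
  have hj := congrFun hβeq j
  by_cases hA : α (Q.head j) ∈ A
  · rw [show (δ ∘ α) (Q.head j) = α (Q.head j) from hδA _ hA] at hj
    exact hj
  · exfalso
    rw [show (δ ∘ α) (Q.head j) = a from hδout _ hA] at hj
    exact ha (hj ▸ hβA (Q.head j))
end

section
/- In a rowo closed process system with initial configuration c₀ = (pos₀, D₀), for every solo execution of instance i from c₀ the produced database equals D₀ ∪ ⋃_{t ∈ Strav} Wr i t D₀, where Strav is the set of transitions traversed by the steps of the execution. In particular, the produced database depends only on the set of traversed transitions, not on their order or multiplicity. -/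
/-- The system is rowo (read-only-write-only): enabling and writing depend only
on a fixed read-only part `Rd` of the database, and written facts avoid `Rd`. -/
def ProcSys.Rowo {U : Type} [DecidableEq U] (S : ProcSys U) : Prop :=
  ∃ Rd : Finset U, ∀ (i : Fin S.k) (t : S.T) (D : Finset U),
    (S.En i t D ↔ S.En i t (D ∩ Rd)) ∧
    S.Wr i t D = S.Wr i t (D ∩ Rd) ∧
    S.Wr i t D ∩ Rd = ∅

/-- A solo execution of instance `i`: an execution in which every step is by `i`. -/
def ProcSys.SoloExec {U : Type} [DecidableEq U] (S : ProcSys U) (i : Fin S.k)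
    (c : S.Config) (n : ℕ) (f : ℕ → S.Config) : Prop :=
  f 0 = c ∧ ∀ j < n, ∃ t : S.T, S.Step i t (f j) (f (j + 1))

/-- in a rowo system, the database produced by a solo execution of
instance `i` from `(pos₀, D₀)` is `D₀` together with the writes `Wr i t D₀` of the
traversed transitions `t`; in particular it depends only on the set of traversed
transitions. -/
theorem rowo_solo_produced_db (U : Type) [Fintype U] [DecidableEq U]
    (S : ProcSys U) (hrowo : S.Rowo)
    (pos₀ : Fin S.k → S.P) (D₀ : Finset U) (i : Fin S.k)
    (n : ℕ) (f : ℕ → S.Config)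
    (hexec : S.SoloExec i (pos₀, D₀) n f) :
    ((f n).2 : Set U) =
      ↑D₀ ∪ ⋃ t ∈ {t : S.T | ∃ j < n, S.Step i t (f j) (f (j + 1))},
        ↑(S.Wr i t D₀) := by

  obtain ⟨Rd, hRd⟩ := hrowo
  obtain ⟨h0, hstep⟩ := hexec
  have hD0 : (f 0).2 = D₀ := by rw [h0]
  have hstep' : ∀ j < n, ∃ t : S.T, (f (j+1)).2 = (f j).2 ∪ S.Wr i t (f j).2 := by
    intro j hj
    obtain ⟨t, _, _, hc⟩ := hstep j hj
    exact ⟨t, by rw [hc]⟩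
  have hinter : ∀ j, j ≤ n → (f j).2 ∩ Rd = D₀ ∩ Rd := by
    intro j
    induction j with
    | zero => intro _; rw [hD0]
    | succ m ih =>
      intro hj
      obtain ⟨t, ht⟩ := hstep' m (Nat.lt_of_succ_le hj)
      rw [ht, Finset.union_inter_distrib_right, (hRd i t (f m).2).2.2,
        Finset.union_empty, ih (Nat.le_of_succ_le hj)]
  have hwr : ∀ j, j ≤ n → ∀ t, S.Wr i t (f j).2 = S.Wr i t D₀ := by
    intro j hj t
    rw [(hRd i t (f j).2).2.1, hinter j hj, ← (hRd i t D₀).2.1]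
  have hmono : ∀ b, b ≤ n → ∀ a, a ≤ b → (f a).2 ⊆ (f b).2 := by
    intro b
    induction b with
    | zero => intro _ a ha; rw [Nat.le_zero.mp ha]
    | succ m ih =>
      intro hb a ha
      rcases Nat.eq_or_lt_of_le ha with h | h
      · rw [h]
      · obtain ⟨t, ht⟩ := hstep' m (Nat.lt_of_succ_le hb)
        have := ih (Nat.le_of_succ_le hb) a (Nat.lt_succ_iff.mp h)
        rw [ht]
        exact this.trans Finset.subset_union_left
  apply subset_antisymm
  · have main : ∀ m, m ≤ n → ((f m).2 : Set U) ⊆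
        ↑D₀ ∪ ⋃ t ∈ {t : S.T | ∃ j < n, S.Step i t (f j) (f (j + 1))},
          ↑(S.Wr i t D₀) := by
      intro m
      induction m with
      | zero => intro _; rw [hD0]; exact Set.subset_union_left
      | succ m ih =>
        intro hm
        obtain ⟨t, hsrc, hen, hc⟩ := hstep m (Nat.lt_of_succ_le hm)
        have ht2 : (f (m+1)).2 = (f m).2 ∪ S.Wr i t (f m).2 := by rw [hc]
        rw [ht2, Finset.coe_union]
        apply Set.union_subset (ih (Nat.le_of_succ_le hm))
        rw [hwr m (Nat.le_of_succ_le hm) t]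
        intro x hx
        exact Or.inr (Set.mem_biUnion (show t ∈ _ from ⟨m, Nat.lt_of_succ_le hm, hsrc, hen, hc⟩) hx)
    exact main n le_rfl
  · apply Set.union_subset
    · rw [← hD0]
      exact_mod_cast hmono n le_rfl 0 (Nat.zero_le n)
    · intro x hx
      simp only [Set.mem_iUnion, Set.mem_setOf_eq] at hx
      obtain ⟨t, ⟨j, hj, hsrc, hen, hc⟩, hx⟩ := hx
      have h1 : (f (j+1)).2 = (f j).2 ∪ S.Wr i t (f j).2 := by rw [hc]
      have h2 : S.Wr i t D₀ ⊆ (f n).2 := by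
        rw [← hwr j (le_of_lt hj) t]
        refine Finset.Subset.trans ?_ (hmono n le_rfl (j+1) hj)
        rw [h1]; exact Finset.subset_union_right
      exact_mod_cast h2 (by exact_mod_cast hx)
end

section
/- In a rowo closed process system with m transitions and initial configuration c₀ = (pos₀, D₀), for every solo execution of instance i from c₀ there exists a solo execution of instance i from c₀ of length at most m * (m + 1) producing the same database. -/
/-!
In a rowo system the read-only part of the database never changes, so every write of a
solo run of instance `i` equals the write the same transition performs on the initial
database `D₀`. Hence after a step via `t` the configuration is determined by `t` and by
the set of transitions used so far: `i` sits at `tgt t`, every other instance at its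
initial place, and the database is `D₀` together with the writes of the used transitions.
The used sets grow along the run and have between `1` and `m` elements, so on a run of
more than `m * m` steps two steps agree in transition and in the size, hence the value,
of the used set. The configurations after these steps coincide and the loop between them
can be cut out.
-/

open Finset

theorem exists_lt_eq_image_range_eq {α : Type*} [Fintype α] [DecidableEq α] (t : ℕ → α)
    {n : ℕ} (hn : Fintype.card α * Fintype.card α < n) :
    ∃ a b, a < b ∧ b < n ∧ t a = t b ∧ (range (a + 1)).image t = (range (b + 1)).image t := by
  set used : ℕ → Finset α := fun j => (range (j + 1)).image t
  have used_pos : ∀ j, 0 < #(used j) := fun j =>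
    card_pos.2 ⟨t j, mem_image_of_mem t (self_mem_range_succ j)⟩
  set slots : Finset (α × ℕ) := univ ×ˢ range (Fintype.card α)
  have hmaps : Set.MapsTo (fun j => (t j, #(used j) - 1)) (range n) slots := fun j _ => by
    have := card_le_univ (used j)
    have := used_pos j
    simp only [slots, coe_product, coe_univ, coe_range, Set.mem_prod, Set.mem_univ,
      Set.mem_Iio, true_and]
    omega
  have hcard : #slots < #(range n) := by
    rwa [card_product, card_univ, card_range, card_range]
  obtain ⟨a, ha, b, hb, hne, hab⟩ := exists_ne_map_eq_of_card_lt_of_maps_to hcard hmaps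
  simp only [mem_range, Prod.mk.injEq] at ha hb hab
  wlog hlt : a < b generalizing a b
  · exact this b a hne.symm hb ha ⟨hab.1.symm, hab.2.symm⟩ (by omega)
  have hsub : used a ⊆ used b := image_subset_image (range_subset_range.2 (by omega))
  have hcard_le : #(used b) ≤ #(used a) := by
    have := used_pos a
    have := used_pos b
    omega
  exact ⟨a, b, hlt, hb, hab.1, eq_of_subset_of_card_le hsub hcard_le⟩

namespace ProcSys

variable {U : Type} [DecidableEq U] {S : ProcSys U} {i : Fin S.k} {t : S.T} {c c' : S.Config}

theorem Step.fst_apply_self (h : S.Step i t c c') : c'.1 i = S.tgt t := by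
  simp [h.2.2]

theorem Step.fst_apply_of_ne (h : S.Step i t c c') {x : Fin S.k} (hx : x ≠ i) :
    c'.1 x = c.1 x := by
  simp [h.2.2, hx]

theorem Step.snd_eq (h : S.Step i t c c') : c'.2 = c.2 ∪ S.Wr i t c.2 := by
  rw [h.2.2]

theorem Rowo.wr_union_biUnion (hS : S.Rowo) (i : Fin S.k) (t : S.T) (D : Finset U)
    (s : Finset S.T) : S.Wr i t (D ∪ s.biUnion fun u => S.Wr i u D) = S.Wr i t D := by
  obtain ⟨Rd, hRd⟩ := hS
  have hwrites : (s.biUnion fun u => S.Wr i u D) ∩ Rd = ∅ := by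
    rw [biUnion_inter, ← subset_empty, biUnion_subset]
    exact fun u _ => (hRd i u D).2.2.subset
  rw [(hRd i t _).2.1, union_inter_distrib_right, hwrites, union_empty, ← (hRd i t D).2.1]

variable {n : ℕ} {f : ℕ → S.Config}

theorem SoloExec.exists_transitions (h : S.SoloExec i c n f) (hn : 0 < n) :
    ∃ t : ℕ → S.T, ∀ j < n, S.Step i (t j) (f j) (f (j + 1)) := by
  classical
  obtain ⟨t₀, -⟩ := h.2 0 hn
  exact ⟨fun j => if hj : j < n then (h.2 j hj).choose else t₀,
    fun j hj => by simpa only [dif_pos hj] using (h.2 j hj).choose_spec⟩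

theorem SoloExec.fst_apply_of_ne (h : S.SoloExec i c n f) {x : Fin S.k} (hx : x ≠ i) :
    ∀ j ≤ n, (f j).1 x = c.1 x
  | 0, _ => by rw [h.1]
  | j + 1, hj => by
    obtain ⟨t, ht⟩ := h.2 j (by omega)
    rw [ht.fst_apply_of_ne hx, h.fst_apply_of_ne hx j (by omega)]

theorem Rowo.soloExec_snd_eq [DecidableEq S.T] (hS : S.Rowo) (h : S.SoloExec i c n f)
    {t : ℕ → S.T} (ht : ∀ j < n, S.Step i (t j) (f j) (f (j + 1))) :
    ∀ j ≤ n, (f j).2 = c.2 ∪ ((range j).image t).biUnion fun u => S.Wr i u c.2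
  | 0, _ => by simp [h.1]
  | j + 1, hj => by
    rw [(ht j (by omega)).snd_eq, hS.soloExec_snd_eq h ht j (by omega), hS.wr_union_biUnion,
      range_add_one, image_insert, biUnion_insert, union_left_comm, union_comm _ (S.Wr _ _ _)]

theorem Rowo.soloExec_eq_of_image_range_eq [DecidableEq S.T] (hS : S.Rowo)
    (h : S.SoloExec i c n f) {t : ℕ → S.T} (ht : ∀ j < n, S.Step i (t j) (f j) (f (j + 1)))
    {a b : ℕ} (hab : a < b) (hbn : b < n) (htab : t a = t b)
    (hused : (range (a + 1)).image t = (range (b + 1)).image t) :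
    f (a + 1) = f (b + 1) := by
  refine Prod.ext (funext fun x => ?_) ?_
  · by_cases hx : x = i
    · rw [hx, (ht a (by omega)).fst_apply_self, (ht b hbn).fst_apply_self, htab]
    · rw [h.fst_apply_of_ne hx _ (by omega), h.fst_apply_of_ne hx _ (by omega)]
  · rw [hS.soloExec_snd_eq h ht _ (by omega), hS.soloExec_snd_eq h ht _ (by omega), hused]

theorem SoloExec.cut_loop (h : S.SoloExec i c n f) {a b : ℕ} (hab : a ≤ b) (hbn : b ≤ n)
    (heq : f a = f b) :
    ∃ f', S.SoloExec i c (n - (b - a)) f' ∧ f' (n - (b - a)) = f n := by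
  set f' : ℕ → S.Config := fun l => if l < a then f l else f (l + (b - a))
  have hlow : ∀ l ≤ a, f' l = f l := fun l hl => by
    rcases hl.lt_or_eq with hl | rfl
    · exact if_pos hl
    · simp only [f', lt_irrefl, if_false, heq, Nat.add_sub_cancel' hab]
  have hhigh : ∀ l, a ≤ l → f' l = f (l + (b - a)) := fun l hl => if_neg (not_lt.2 hl)
  refine ⟨f', ⟨(hlow 0 (Nat.zero_le a)).trans h.1, fun l hl => ?_⟩, ?_⟩
  · by_cases hla : l < a
    · rw [hlow l hla.le, hlow (l + 1) hla]
      exact h.2 l (by omega)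
    · rw [hhigh l (by omega), hhigh (l + 1) (by omega), Nat.add_right_comm]
      exact h.2 _ (by omega)
  · rw [hhigh _ (by omega), Nat.sub_add_cancel (by omega)]

theorem Rowo.exists_soloExec_length_le (hS : S.Rowo) (h : S.SoloExec i c n f) :
    ∃ n' ≤ Fintype.card S.T * Fintype.card S.T, ∃ f', S.SoloExec i c n' f' ∧ f' n' = f n := by
  classical
  induction n using Nat.strong_induction_on generalizing f with
  | _ n ih =>
  by_cases hn : n ≤ Fintype.card S.T * Fintype.card S.T
  · exact ⟨n, hn, f, h, rfl⟩
  obtain ⟨t, ht⟩ := h.exists_transitions (by omega)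
  obtain ⟨a, b, hab, hbn, htab, hused⟩ := exists_lt_eq_image_range_eq t (not_le.1 hn)
  obtain ⟨f', hf', hlast⟩ := h.cut_loop (by omega) (by omega)
    (hS.soloExec_eq_of_image_range_eq h ht hab hbn htab hused)
  obtain ⟨n', hn', f'', hf'', hlast'⟩ := ih _ (by omega) hf'
  exact ⟨n', hn', f'', hf'', hlast'.trans hlast⟩

end ProcSys

theorem rowo_solo_shorten_general (U : Type) [DecidableEq U]
    (S : ProcSys U) (hrowo : S.Rowo)
    (pos₀ : Fin S.k → S.P) (D₀ : Finset U) (i : Fin S.k)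
    (n : ℕ) (f : ℕ → S.Config)
    (hexec : S.SoloExec i (pos₀, D₀) n f) :
    ∃ (n' : ℕ) (f' : ℕ → S.Config),
      n' ≤ Fintype.card S.T * (Fintype.card S.T + 1) ∧
      S.SoloExec i (pos₀, D₀) n' f' ∧ (f' n').2 = (f n).2 := by
  obtain ⟨n', hn', f', hf', hlast⟩ := hrowo.exists_soloExec_length_le hexec
  exact ⟨n', f', hn'.trans (Nat.mul_le_mul_left _ (Nat.le_succ _)), hf', congrArg Prod.snd hlast⟩

/-- in a rowo system, every solo execution of instance `i` can be
replaced by a solo execution of `i` of length at most `m * (m + 1)` producing the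
same database. -/
theorem rowo_solo_shorten (U : Type) [Fintype U] [DecidableEq U]
    (S : ProcSys U) (hrowo : S.Rowo)
    (pos₀ : Fin S.k → S.P) (D₀ : Finset U) (i : Fin S.k)
    (n : ℕ) (f : ℕ → S.Config)
    (hexec : S.SoloExec i (pos₀, D₀) n f) :
    ∃ (n' : ℕ) (f' : ℕ → S.Config),
      n' ≤ Fintype.card S.T * (Fintype.card S.T + 1) ∧
      S.SoloExec i (pos₀, D₀) n' f' ∧ (f' n').2 = (f n).2 :=
  rowo_solo_shorten_general U S hrowo pos₀ D₀ i n f hexec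
end

section
/- In a rowo closed process system with k ≥ 1 instances and initial configuration c₀ = (pos₀, D₀), a database D' is produced by some execution from c₀ if and only if there exist databases D₁, …, D_k such that each Dᵢ is produced by some solo execution of instance i from c₀ and D' = D₁ ∪ ⋯ ∪ D_k. -/
namespace ProcSys
variable {U : Type} [DecidableEq U] {S : ProcSys U}

lemma solo_tail {i : Fin S.k} {c : S.Config} {n f} (h : S.SoloExec i c (n+1) f) :
    S.SoloExec i (f 1) n (fun j => f (j+1)) :=
  ⟨rfl, fun j hj => h.2 (j+1) (by omega)⟩

lemma exec_tail {c : S.Config} {n f} (h : S.IsExec c (n+1) f) :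
    S.IsExec (f 1) n (fun j => f (j+1)) :=
  ⟨rfl, fun j hj => h.2 (j+1) (by omega)⟩

lemma solo_mono {i : Fin S.k} {n : ℕ} :
    ∀ {c : S.Config} {f}, S.SoloExec i c n f → c.2 ⊆ (f n).2 := by
  induction n with
  | zero => intro c f h; rw [h.1]
  | succ n ih =>
    intro c f h
    obtain ⟨t, _, _, hstep⟩ := h.2 0 (Nat.succ_pos n)
    have h2 := ih (solo_tail h)
    rw [h.1] at hstep
    refine subset_trans ?_ h2
    rw [show (0:ℕ)+1 = 1 from rfl] at hstep
    rw [hstep]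
    exact Finset.subset_union_left

lemma solo_posfix {i : Fin S.k} {n : ℕ} :
    ∀ {c : S.Config} {f}, S.SoloExec i c n f → ∀ j, j ≠ i → (f n).1 j = c.1 j := by
  induction n with
  | zero => intro c f h j _; rw [h.1]
  | succ n ih =>
    intro c f h j hj
    obtain ⟨t, _, _, hstep⟩ := h.2 0 (Nat.succ_pos n)
    have h2 := ih (solo_tail h) j hj
    rw [h.1] at hstep
    rw [show (0:ℕ)+1 = 1 from rfl] at hstep
    rw [h2, hstep]
    exact Function.update_of_ne hj _ _

lemma solo_toExec {i : Fin S.k} {c : S.Config} {n f} (h : S.SoloExec i c n f) :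
    S.IsExec c n f :=
  ⟨h.1, fun j hj => ⟨i, h.2 j hj⟩⟩

lemma exec_concat {c : S.Config} {n f m g} (hf : S.IsExec c n f) (hg : S.IsExec (f n) m g) :
    ∃ h, S.IsExec c (n + m) h ∧ h (n + m) = g m := by
  refine ⟨fun j => if j < n then f j else g (j - n), ⟨?_, ?_⟩, ?_⟩
  · by_cases h0 : 0 < n
    · simp [h0, hf.1]
    · have hn : n = 0 := by omega
      simp only [h0, if_false]
      rw [Nat.zero_sub] at *
      rw [hg.1, hn, hf.1]
  · intro j hj
    by_cases h1 : j + 1 < n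
    · have h2 : j < n := by omega
      simp only [h1, h2, if_true]
      exact hf.2 j (by omega)
    · by_cases h2 : j < n
      · have h3 : j + 1 = n := by omega
        simp only [h1, h2, if_true, if_false]
        have := hf.2 j (by omega)
        rw [h3, Nat.sub_self, hg.1, ← h3]
        exact this
      · simp only [h1, h2, if_false]
        have h4 : j - n < m := by omega
        have := hg.2 (j - n) h4
        have e1 : j + 1 - n = j - n + 1 := by omega
        rw [e1]
        exact this
  · have : ¬ (n + m < n) := by omega
    simp only [this, if_false, Nat.add_sub_cancel_left]

lemma solo_cons {i : Fin S.k} {t c c₁ n f} (hs : S.Step i t c c₁)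
    (hf : S.SoloExec i c₁ n f) :
    ∃ g, S.SoloExec i c (n+1) g ∧ g (n+1) = f n := by
  refine ⟨fun j => if j = 0 then c else f (j - 1), ⟨by simp, ?_⟩, by simp⟩
  intro j hj
  match j with
  | 0 =>
    refine ⟨t, ?_⟩
    simp only [if_pos rfl, if_neg (Nat.one_ne_zero), Nat.sub_self]
    rw [hf.1]
    exact hs
  | j + 1 =>
    obtain ⟨t', ht'⟩ := hf.2 j (by omega)
    refine ⟨t', ?_⟩
    simp only [if_neg (Nat.succ_ne_zero j), Nat.add_sub_cancel]
    exact ht'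




/-- Key lemma: a solo execution of instance `i` can be transplanted to a new
starting configuration with the same position of `i` and the same read-only part. -/
lemma transplant {Rd : Finset U}
    (hRd : ∀ (i : Fin S.k) (t : S.T) (D : Finset U),
      (S.En i t D ↔ S.En i t (D ∩ Rd)) ∧
      S.Wr i t D = S.Wr i t (D ∩ Rd) ∧
      S.Wr i t D ∩ Rd = ∅)
    {i : Fin S.k} : ∀ {n : ℕ} {pos : Fin S.k → S.P} {D : Finset U} {f},
    S.SoloExec i (pos, D) n f →
    ∀ (pos' : Fin S.k → S.P) (E : Finset U), pos' i = pos i → E ∩ Rd = D ∩ Rd →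
    ∃ g, S.SoloExec i (pos', E) n g ∧
      (g n).2 ∩ Rd = E ∩ Rd ∧ (g n).2 ∪ D = (f n).2 ∪ E ∧ E ⊆ (g n).2 := by
  intro n
  induction n with
  | zero =>
    intro pos D f h pos' E hpos hE
    refine ⟨fun _ => (pos', E), ⟨rfl, fun j hj => absurd hj (by omega)⟩, rfl, ?_, subset_rfl⟩
    rw [h.1, Finset.union_comm]
  | succ n ih =>
    intro pos D f h pos' E hpos hE
    obtain ⟨t, hsrc, hen, hstep⟩ := h.2 0 (Nat.succ_pos n)
    rw [h.1] at hsrc hen hstep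
    rw [show (0:ℕ)+1 = 1 from rfl] at hstep
    have hWr : S.Wr i t E = S.Wr i t D := by
      rw [(hRd i t E).2.1, (hRd i t D).2.1, hE]
    have hEn : S.En i t E := by
      rw [(hRd i t E).1, hE, ← (hRd i t D).1]; exact hen
    set W := S.Wr i t D with hW
    have hw0 : W ∩ Rd = ∅ := (hRd i t D).2.2
    have htail : S.SoloExec i (Function.update pos i (S.tgt t), D ∪ W) n
        (fun j => f (j+1)) := by
      have h2 := solo_tail h
      rwa [hstep] at h2
    have hE' : (E ∪ W) ∩ Rd = (D ∪ W) ∩ Rd := by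
      rw [Finset.union_inter_distrib_right, Finset.union_inter_distrib_right, hw0, hE]
    obtain ⟨g', hg', hrd', hun', hsub'⟩ :=
      ih htail (Function.update pos' i (S.tgt t)) (E ∪ W) (by simp) hE'
    have hWg : W ⊆ (g' n).2 := subset_trans Finset.subset_union_right hsub'
    have hWf : W ⊆ (f (n+1)).2 := by
      exact subset_trans Finset.subset_union_right (solo_mono htail)
    refine ⟨fun j => if j = 0 then (pos', E) else g' (j - 1), ⟨by simp, ?_⟩, ?_, ?_, ?_⟩
    · intro j hj
      match j with
      | 0 =>
        refine ⟨t, hpos.trans hsrc, hEn, ?_⟩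
        show g' 0 = (Function.update pos' i (S.tgt t), E ∪ S.Wr i t E)
        rw [hg'.1, hWr]
      | j + 1 =>
        obtain ⟨t', ht'⟩ := hg'.2 j (by omega)
        exact ⟨t', ht'⟩
    · show (g' n).2 ∩ Rd = E ∩ Rd
      rw [hrd', Finset.union_inter_distrib_right, hw0, Finset.union_empty]
    · show (g' n).2 ∪ D = (f (n+1)).2 ∪ E
      have e1 : (g' n).2 ∪ W = (g' n).2 := Finset.union_eq_left.mpr hWg
      have e2 : (f (n+1)).2 ∪ W = (f (n+1)).2 := Finset.union_eq_left.mpr hWf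
      calc (g' n).2 ∪ D = (g' n).2 ∪ W ∪ D := by rw [e1]
        _ = (g' n).2 ∪ (D ∪ W) := by
            rw [Finset.union_assoc, Finset.union_comm W D]
        _ = (f (n+1)).2 ∪ (E ∪ W) := hun'
        _ = (f (n+1)).2 ∪ W ∪ E := by
            rw [Finset.union_assoc, Finset.union_comm W E]
        _ = (f (n+1)).2 ∪ E := by rw [e2]
    · exact subset_trans Finset.subset_union_left hsub'




lemma forward_dir {Rd : Finset U}
    (hRd : ∀ (i : Fin S.k) (t : S.T) (D : Finset U),
      (S.En i t D ↔ S.En i t (D ∩ Rd)) ∧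
      S.Wr i t D = S.Wr i t (D ∩ Rd) ∧
      S.Wr i t D ∩ Rd = ∅)
    (hk : 1 ≤ S.k) :
    ∀ (n : ℕ) (pos₀ : Fin S.k → S.P) (D₀ : Finset U) (f : ℕ → S.Config),
    S.IsExec (pos₀, D₀) n f →
    ∃ Ds : Fin S.k → Finset U,
      (∀ i : Fin S.k, ∃ m g, S.SoloExec i (pos₀, D₀) m g ∧ (g m).2 = Ds i) ∧
      (f n).2 = Finset.univ.biUnion Ds := by
  intro n
  induction n with
  | zero =>
    intro pos₀ D₀ f h
    refine ⟨fun _ => D₀, fun i => ⟨0, fun _ => (pos₀, D₀),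
      ⟨rfl, fun j hj => absurd hj (by omega)⟩, rfl⟩, ?_⟩
    rw [h.1]
    apply Finset.Subset.antisymm
    · intro x hx
      exact Finset.mem_biUnion.mpr ⟨⟨0, hk⟩, Finset.mem_univ _, hx⟩
    · intro x hx
      obtain ⟨j, _, hxj⟩ := Finset.mem_biUnion.mp hx
      exact hxj
  | succ n ih =>
    intro pos₀ D₀ f h
    obtain ⟨i, t, hsrc, hen, hstep⟩ := h.2 0 (Nat.succ_pos n)
    rw [h.1] at hsrc hen hstep
    rw [show (0:ℕ)+1 = 1 from rfl] at hstep
    set W := S.Wr i t D₀ with hW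
    have hw0 : W ∩ Rd = ∅ := (hRd i t D₀).2.2
    have htail : S.IsExec (Function.update pos₀ i (S.tgt t), D₀ ∪ W) n
        (fun j => f (j+1)) := by
      have h2 := exec_tail h
      rwa [hstep] at h2
    obtain ⟨Ds, hsolo, hun⟩ := ih _ _ _ htail
    have hWi : W ⊆ Ds i := by
      obtain ⟨m, g, hg, hgeq⟩ := hsolo i
      have h2 := solo_mono hg
      rw [hgeq] at h2
      exact subset_trans Finset.subset_union_right h2
    have key : ∀ j : Fin S.k, ∃ E', (∃ m g, S.SoloExec j (pos₀, D₀) m g ∧ (g m).2 = E') ∧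
        E' ∪ W = Ds j ∪ W ∧ E' ⊆ Ds j ∪ W ∧ (j = i → W ⊆ E') := by
      intro j
      by_cases hj : j = i
      · subst hj
        obtain ⟨m, g, hg, hgeq⟩ := hsolo j
        have hstep0 : S.Step j t (pos₀, D₀) (Function.update pos₀ j (S.tgt t), D₀ ∪ W) :=
          ⟨hsrc, hen, rfl⟩
        obtain ⟨g2, hg2, hg2eq⟩ := solo_cons hstep0 hg
        exact ⟨Ds j, ⟨m+1, g2, hg2, by rw [hg2eq, hgeq]⟩, rfl,
          Finset.subset_union_left, fun _ => hWi⟩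
      · obtain ⟨m, g, hg, hgeq⟩ := hsolo j
        have hE : D₀ ∩ Rd = (D₀ ∪ W) ∩ Rd := by
          rw [Finset.union_inter_distrib_right, hw0, Finset.union_empty]
        obtain ⟨g2, hg2, _, hun2, hsub2⟩ :=
          transplant hRd hg pos₀ D₀ (Function.update_of_ne hj _ _).symm hE
        rw [hgeq] at hun2
        have hmono := solo_mono hg
        rw [hgeq] at hmono
        have hD₀j : D₀ ⊆ Ds j := subset_trans Finset.subset_union_left hmono
        have hWj : W ⊆ Ds j := subset_trans Finset.subset_union_right hmono
        have e0 : (g2 m).2 ∪ D₀ = (g2 m).2 := Finset.union_eq_left.mpr hsub2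
        have hmain : (g2 m).2 ∪ W = Ds j ∪ W := by
          calc (g2 m).2 ∪ W = (g2 m).2 ∪ D₀ ∪ W := by rw [e0]
            _ = (g2 m).2 ∪ (D₀ ∪ W) := Finset.union_assoc _ _ _
            _ = Ds j ∪ D₀ := hun2
            _ = Ds j := Finset.union_eq_left.mpr hD₀j
            _ = Ds j ∪ W := (Finset.union_eq_left.mpr hWj).symm
        exact ⟨(g2 m).2, ⟨m, g2, hg2, rfl⟩, hmain,
          hmain ▸ Finset.subset_union_left, fun hji => absurd hji hj⟩
    choose Ds' h1 h2 h3 h4 using key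
    refine ⟨Ds', h1, ?_⟩
    rw [hun]
    apply Finset.Subset.antisymm
    · intro x hx
      obtain ⟨j, _, hxj⟩ := Finset.mem_biUnion.mp hx
      have hx2 : x ∈ Ds' j ∪ W := by
        rw [h2 j]; exact Finset.mem_union_left _ hxj
      rcases Finset.mem_union.mp hx2 with hx3 | hx3
      · exact Finset.mem_biUnion.mpr ⟨j, Finset.mem_univ _, hx3⟩
      · exact Finset.mem_biUnion.mpr ⟨i, Finset.mem_univ _, h4 i rfl hx3⟩
    · intro x hx
      obtain ⟨j, _, hxj⟩ := Finset.mem_biUnion.mp hx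
      rcases Finset.mem_union.mp (h3 j hxj) with hx3 | hx3
      · exact Finset.mem_biUnion.mpr ⟨j, Finset.mem_univ _, hx3⟩
      · exact Finset.mem_biUnion.mpr ⟨i, Finset.mem_univ _, hWi hx3⟩

lemma backward_dir {Rd : Finset U}
    (hRd : ∀ (i : Fin S.k) (t : S.T) (D : Finset U),
      (S.En i t D ↔ S.En i t (D ∩ Rd)) ∧
      S.Wr i t D = S.Wr i t (D ∩ Rd) ∧
      S.Wr i t D ∩ Rd = ∅)
    (pos₀ : Fin S.k → S.P) (D₀ : Finset U) (Ds : Fin S.k → Finset U)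
    (hsolo : ∀ i : Fin S.k, ∃ m g, S.SoloExec i (pos₀, D₀) m g ∧ (g m).2 = Ds i) :
    ∀ s : Finset (Fin S.k), ∀ (pos : Fin S.k → S.P) (E : Finset U),
      (∀ i ∈ s, pos i = pos₀ i) → E ∩ Rd = D₀ ∩ Rd → D₀ ⊆ E →
      ∃ n f, S.IsExec (pos, E) n f ∧ (f n).2 = E ∪ s.biUnion Ds := by
  intro s
  induction s using Finset.induction_on with
  | empty =>
    intro pos E _ _ _
    exact ⟨0, fun _ => (pos, E), ⟨rfl, fun j hj => absurd hj (by omega)⟩, by simp⟩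
  | @insert i s hi ih =>
    intro pos E hpos hE hD₀
    obtain ⟨m, g, hg, hgeq⟩ := hsolo i
    obtain ⟨g2, hg2, hrd2, hun2, hsub2⟩ :=
      transplant hRd hg pos E (hpos i (Finset.mem_insert_self i s)) hE
    have hg2E : (g2 m).2 = E ∪ Ds i := by
      rw [hgeq] at hun2
      have e0 : (g2 m).2 ∪ D₀ = (g2 m).2 :=
        Finset.union_eq_left.mpr (subset_trans hD₀ hsub2)
      rw [e0] at hun2
      rw [hun2, Finset.union_comm]
    obtain ⟨n2, f2, hf2, hf2eq⟩ := ih (g2 m).1 (g2 m).2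
      (fun j hj => by
        have hji : j ≠ i := fun h => hi (h ▸ hj)
        have := solo_posfix hg2 j hji
        exact this.trans (hpos j (Finset.mem_insert_of_mem hj)))
      (hrd2.trans hE)
      (subset_trans hD₀ hsub2)
    rw [Prod.mk.eta] at hf2
    obtain ⟨h3, hh3, hh3eq⟩ := exec_concat (solo_toExec hg2) hf2
    refine ⟨m + n2, h3, hh3, ?_⟩
    rw [hh3eq, hf2eq, hg2E, Finset.biUnion_insert, Finset.union_assoc]

end ProcSys

/-- in a rowo system with `k ≥ 1` instances, a database is produced
by some execution iff it is the union of databases produced by solo executions of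
the individual instances. -/
theorem rowo_decomposition (U : Type) [Fintype U] [DecidableEq U]
    (S : ProcSys U) (hrowo : S.Rowo) (hk : 1 ≤ S.k)
    (pos₀ : Fin S.k → S.P) (D₀ D' : Finset U) :
    (∃ (n : ℕ) (f : ℕ → S.Config), S.IsExec (pos₀, D₀) n f ∧ (f n).2 = D') ↔
    (∃ Ds : Fin S.k → Finset U,
      (∀ i : Fin S.k, ∃ (n : ℕ) (f : ℕ → S.Config),
        S.SoloExec i (pos₀, D₀) n f ∧ (f n).2 = Ds i) ∧
      D' = Finset.univ.biUnion Ds) := by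

  obtain ⟨Rd, hRd⟩ := hrowo
  constructor
  · rintro ⟨n, f, hf, rfl⟩
    obtain ⟨Ds, h1, h2⟩ := ProcSys.forward_dir hRd hk n pos₀ D₀ f hf
    exact ⟨Ds, h1, h2⟩
  · rintro ⟨Ds, hsolo, rfl⟩
    obtain ⟨n, f, hf, hfeq⟩ := ProcSys.backward_dir hRd pos₀ D₀ Ds hsolo
      Finset.univ pos₀ D₀ (fun _ _ => rfl) rfl subset_rfl
    refine ⟨n, f, hf, ?_⟩
    rw [hfeq]
    have hsub : D₀ ⊆ Ds ⟨0, hk⟩ := by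
      obtain ⟨m, g, hg, hgeq⟩ := hsolo ⟨0, hk⟩
      exact hgeq ▸ ProcSys.solo_mono hg
    exact Finset.union_eq_right.mpr
      (subset_trans hsub (Finset.subset_biUnion_of_mem Ds (Finset.mem_univ _)))
end

section
/- In a positive closed process system, if D₀ ⊆ E₀, then for every execution from (pos₀, D₀) there is an execution from (pos₀, E₀) performing the same sequence of (instance, transition) steps; the final configuration of the latter has the same position function as that of the former, and its database contains the database produced by the former. -/
/-- The system is positive: enabling and writing are monotone in the database. -/
def ProcSys.Positive {U : Type} [DecidableEq U] (S : ProcSys U) : Prop :=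
  ∀ (i : Fin S.k) (t : S.T) (D D' : Finset U), D ⊆ D' →
    (S.En i t D → S.En i t D') ∧ S.Wr i t D ⊆ S.Wr i t D'

/-- in a positive system, if `D₀ ⊆ E₀` then every execution from
`(pos₀, D₀)` can be replayed from `(pos₀, E₀)` with the same sequence of
(instance, transition) steps; the final positions agree, and the final database
of the replay contains the database produced by the original execution. -/
theorem positive_monotone_replay (U : Type) [Fintype U] [DecidableEq U]
    (S : ProcSys U) (hpos : S.Positive)
    (pos₀ : Fin S.k → S.P) (D₀ E₀ : Finset U) (hDE : D₀ ⊆ E₀)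
    (n : ℕ) (f : ℕ → S.Config) (ι : ℕ → Fin S.k) (tr : ℕ → S.T)
    (h0 : f 0 = (pos₀, D₀))
    (hstep : ∀ j < n, S.Step (ι j) (tr j) (f j) (f (j + 1))) :
    ∃ g : ℕ → S.Config, g 0 = (pos₀, E₀) ∧
      (∀ j < n, S.Step (ι j) (tr j) (g j) (g (j + 1))) ∧
      (g n).1 = (f n).1 ∧ (f n).2 ⊆ (g n).2 := by
  classical
  set g : ℕ → S.Config := fun j => Nat.rec (pos₀, E₀)
    (fun j c => (Function.update c.1 (ι j) (S.tgt (tr j)), c.2 ∪ S.Wr (ι j) (tr j) c.2)) j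
    with hg
  have key : ∀ j ≤ n, (g j).1 = (f j).1 ∧ (f j).2 ⊆ (g j).2 := by
    intro j hj
    induction j with
    | zero => simp [hg, h0, hDE]
    | succ m ih =>
      obtain ⟨hp, hd⟩ := ih (le_of_lt (Nat.lt_of_succ_le hj))
      obtain ⟨h1, h2, h3⟩ := hstep m (Nat.lt_of_succ_le hj)
      constructor
      · show (Function.update (g m).1 (ι m) (S.tgt (tr m))) = (f (m+1)).1
        rw [h3, hp]
      · show (f (m+1)).2 ⊆ (g m).2 ∪ S.Wr (ι m) (tr m) (g m).2
        rw [h3]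
        exact Finset.union_subset_union hd ((hpos (ι m) (tr m) _ _ hd).2)
  refine ⟨g, rfl, ?_, (key n le_rfl).1, (key n le_rfl).2⟩
  intro j hj
  obtain ⟨hp, hd⟩ := key j hj.le
  obtain ⟨h1, h2, h3⟩ := hstep j hj
  exact ⟨by rw [hp, h1], (hpos (ι j) (tr j) _ _ hd).1 h2, rfl⟩
end
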